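/- arXiv:physics/0510114 — 7 statements merged into one kernel-verified Lean document; each statement's English description precedes it below -/
import Mathlib

section
/- If ψ : [z₁, z₂] → ℂ is continuously differentiable with ψ(z₁) = 0 = ψ(z₂), then ∫_{z₁}^{z₂} |ψ(z)|² dz ≤ ((z₂ − z₁)²/π²) · ∫_{z₁}^{z₂} |ψ′(z)|² dz. -/
/-!
Reflect `ψ` oddly about `z₁`: the result `F` lives on `[2 z₁ - z₂, z₂]`, an interval of length
`2 (z₂ - z₁)`, is `C¹` there with the even reflection of `ψ'` as derivative, takes equal values at
the endpoints and has mean zero. Integrating by parts, its Fourier coefficients satisfy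
`|F̂(n)| = (z₂ - z₁) / (π |n|) · |F̂'(n)|` for `n ≠ 0`, and `F̂(0) = 0`, so Parseval gives
`∫ |F|² ≤ ((z₂ - z₁) / π)² ∫ |F'|²`. Both sides are twice the corresponding integrals over
`[z₁, z₂]`.
-/

open Real intervalIntegral MeasureTheory Set

lemma ContinuousOn.memLp_two_restrict_Ioc {E : Type*} [NormedAddCommGroup E] {a b : ℝ}
    {f : ℝ → E} (hf : ContinuousOn f (Icc a b)) : MemLp f 2 (volume.restrict (Ioc a b)) := by
  have hmeas : AEStronglyMeasurable f (volume.restrict (Icc a b)) :=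
    hf.aestronglyMeasurable_of_isCompact isCompact_Icc measurableSet_Icc
  exact ((memLp_two_iff_integrable_sq_norm hmeas).2 (hf.norm.pow 2).integrableOn_Icc).mono_measure
    (Measure.restrict_mono Ioc_subset_Icc_self le_rfl)

lemma norm_fourierCoeffOn_of_hasDerivAt {a b : ℝ} (hab : a < b) {f f' : ℝ → ℂ} {n : ℤ}
    (hn : n ≠ 0) (hf : ∀ x ∈ Icc a b, HasDerivAt f (f' x) x)
    (hf' : IntervalIntegrable f' volume a b) (hfab : f a = f b) :
    ‖fourierCoeffOn hab f n‖ = (b - a) / (2 * π * |(n : ℝ)|) * ‖fourierCoeffOn hab f' n‖ := by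
  rw [fourierCoeffOn_of_hasDerivAt hab hn (by rwa [uIcc_of_le hab.le]) hf', hfab, sub_self,
    mul_zero, zero_sub, norm_mul, norm_neg, norm_mul, norm_div, norm_one]
  have hba : ‖((b - a : ℝ) : ℂ)‖ = b - a := by
    rw [Complex.norm_real, Real.norm_of_nonneg (by linarith)]
  have hden : ‖(-2 : ℂ) * π * Complex.I * n‖ = 2 * π * |(n : ℝ)| := by
    simp [Complex.norm_intCast, abs_of_pos pi_pos]
  push_cast at hba
  rw [hba, hden]
  ring

theorem integral_norm_sq_le_of_integral_eq_zero {a b : ℝ} (hab : a < b) {f f' : ℝ → ℂ}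
    (hf : ∀ x ∈ Icc a b, HasDerivAt f (f' x) x) (hf' : MemLp f' 2 (volume.restrict (Ioc a b)))
    (hfab : f a = f b) (hmean : ∫ x in a..b, f x = 0) :
    ∫ x in a..b, ‖f x‖ ^ 2 ≤ ((b - a) / (2 * π)) ^ 2 * ∫ x in a..b, ‖f' x‖ ^ 2 := by
  set C := ((b - a) / (2 * π)) ^ 2 with hC
  have hf'int : IntervalIntegrable f' volume a b :=
    (intervalIntegrable_iff_integrableOn_Ioc_of_le hab.le).2 (hf'.integrable one_le_two)
  have hcoeff (n : ℤ) : ‖fourierCoeffOn hab f n‖ ^ 2 ≤ C * ‖fourierCoeffOn hab f' n‖ ^ 2 := by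
    rcases eq_or_ne n 0 with rfl | hn
    · rw [fourierCoeffOn_eq_integral]
      simp only [neg_zero, fourier_zero, one_smul, hmean, smul_zero, norm_zero,
        zero_pow two_ne_zero, hC]
      positivity
    rw [norm_fourierCoeffOn_of_hasDerivAt hab hn hf hf'int hfab, mul_pow, hC, div_pow, div_pow]
    have hn1 : (1 : ℝ) ≤ |(n : ℝ)| := by exact_mod_cast Int.one_le_abs hn
    gcongr _ / ?_ ^ 2 * _
    exact le_mul_of_one_le_right (by positivity) hn1
  have hsum := hasSum_le hcoeff
    (hasSum_sq_fourierCoeffOn hab (HasDerivAt.continuousOn hf).memLp_two_restrict_Ioc)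
    ((hasSum_sq_fourierCoeffOn hab hf').mul_left C)
  rw [smul_eq_mul, smul_eq_mul, mul_left_comm] at hsum
  exact le_of_mul_le_mul_left hsum (inv_pos.2 (sub_pos.2 hab))

section Reflection

variable {E : Type*} [NormedAddCommGroup E]

noncomputable def oddReflect (c : ℝ) (f : ℝ → E) (z : ℝ) : E :=
  if z ≤ c then -f (2 * c - z) else f z

def evenReflect (c : ℝ) (f : ℝ → E) (z : ℝ) : E := f (c + |z - c|)

variable {c : ℝ}

lemma add_abs_sub_mem_Icc {b z : ℝ} (hz : z ∈ Icc (2 * c - b) b) : c + |z - c| ∈ Icc c b := by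
  refine ⟨by simp, ?_⟩
  rcases le_total z c with h | h
  · rw [abs_of_nonpos (sub_nonpos.2 h)]; linarith [hz.1]
  · rw [abs_of_nonneg (sub_nonneg.2 h)]; linarith [hz.2]

lemma oddReflect_of_le {f : ℝ → E} (hc : f c = 0) {z : ℝ} (hz : c ≤ z) :
    oddReflect c f z = f z := by
  rcases hz.eq_or_lt with rfl | hz
  · simp [oddReflect, two_mul, hc]
  · exact if_neg hz.not_ge

lemma norm_oddReflect (f : ℝ → E) (z : ℝ) : ‖oddReflect c f z‖ = ‖f (c + |z - c|)‖ := by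
  rcases le_or_gt z c with hz | hz
  · rw [oddReflect, if_pos hz, norm_neg, abs_of_nonpos (sub_nonpos.2 hz)]
    ring_nf
  · rw [oddReflect, if_neg hz.not_ge, abs_of_pos (sub_pos.2 hz)]
    ring_nf

lemma continuousOn_evenReflect {b : ℝ} {f : ℝ → E} (hf : ContinuousOn f (Icc c b)) :
    ContinuousOn (evenReflect c f) (Icc (2 * c - b) b) :=
  hf.comp (by fun_prop) fun _ ↦ add_abs_sub_mem_Icc

section

variable [NormedSpace ℝ E]

lemma hasDerivAt_oddReflect {f f' : ℝ → E} {z : ℝ}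
    (hf : HasDerivAt f (f' (c + |z - c|)) (c + |z - c|)) (hc : f c = 0) :
    HasDerivAt (oddReflect c f) (evenReflect c f' z) z := by
  have hleft (hz : z ≤ c) :
      HasDerivWithinAt (oddReflect c f) (evenReflect c f' z) (Iic c) z := by
    have hz' : c + |z - c| = 2 * c - z := by rw [abs_of_nonpos (sub_nonpos.2 hz)]; ring
    rw [hz'] at hf
    rw [evenReflect, hz', ← neg_neg (f' _)]
    exact (hf.comp_const_sub (2 * c) z).neg.hasDerivWithinAt.congr (fun x hx ↦ if_pos hx)
      (if_pos hz)
  have hright (hz : c ≤ z) :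
      HasDerivWithinAt (oddReflect c f) (evenReflect c f' z) (Ici c) z := by
    have hz' : c + |z - c| = z := by rw [abs_of_nonneg (sub_nonneg.2 hz)]; ring
    rw [hz'] at hf
    rw [evenReflect, hz']
    exact hf.hasDerivWithinAt.congr (fun x hx ↦ oddReflect_of_le hc hx) (oddReflect_of_le hc hz)
  rcases lt_trichotomy z c with hz | rfl | hz
  · exact (hleft hz.le).hasDerivAt (Iic_mem_nhds hz)
  · simpa [Iic_union_Ici] using (hleft le_rfl).union (hright le_rfl)
  · exact (hright hz.le).hasDerivAt (Ici_mem_nhds hz)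

lemma integral_eq_integral_reflect_add {b : ℝ} (hcb : c ≤ b) {g : ℝ → E}
    (hg : IntervalIntegrable g volume (2 * c - b) b) :
    ∫ z in (2 * c - b)..b, g z = ∫ z in c..b, (g (2 * c - z) + g z) := by
  have hleft : IntervalIntegrable g volume (2 * c - b) c :=
    hg.mono_set (uIcc_subset_uIcc left_mem_uIcc (mem_uIcc_of_le (by linarith) hcb))
  have hright : IntervalIntegrable g volume c b :=
    hg.mono_set (uIcc_subset_uIcc (mem_uIcc_of_le (by linarith) hcb) right_mem_uIcc)
  have hreflected : IntervalIntegrable (fun z ↦ g (2 * c - z)) volume c b := by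
    have := hleft.comp_sub_left (2 * c)
    rw [sub_sub_cancel, show 2 * c - c = c by ring] at this
    exact this.symm
  rw [integral_add hreflected hright, ← integral_add_adjacent_intervals hleft hright,
    integral_comp_sub_left, show 2 * c - c = c by ring]

lemma integral_oddReflect {b : ℝ} (hcb : c ≤ b) {f : ℝ → E}
    (hf : IntervalIntegrable (oddReflect c f) volume (2 * c - b) b) :
    ∫ z in (2 * c - b)..b, oddReflect c f z = 0 := by
  rw [integral_eq_integral_reflect_add hcb hf, ← intervalIntegral.integral_zero]
  refine integral_congr_ae (.of_forall fun z hz ↦ ?_)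
  rw [uIoc_of_le hcb] at hz
  have hreflect : 2 * c - z ≤ c := by linarith [hz.1]
  rw [oddReflect, oddReflect, if_pos hreflect, if_neg hz.1.not_ge, sub_sub_cancel, neg_add_cancel]

lemma integral_evenReflect {b : ℝ} (hcb : c ≤ b) {f : ℝ → E} (hf : ContinuousOn f (Icc c b)) :
    ∫ z in (2 * c - b)..b, evenReflect c f z = (2 : ℝ) • ∫ z in c..b, f z := by
  rw [integral_eq_integral_reflect_add hcb
    ((continuousOn_evenReflect hf).intervalIntegrable_of_Icc (by linarith)),
    ← intervalIntegral.integral_smul]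
  refine integral_congr fun z hz ↦ ?_
  rw [uIcc_of_le hcb] at hz
  have hreflect : c + |2 * c - z - c| = z := by rw [abs_of_nonpos (by linarith [hz.1])]; ring
  have hself : c + |z - c| = z := by rw [abs_of_nonneg (by linarith [hz.1])]; ring
  simp only [evenReflect, hreflect, hself, two_smul]

end

lemma integral_norm_sq_oddReflect {b : ℝ} (hcb : c ≤ b) {f : ℝ → E}
    (hf : ContinuousOn f (Icc c b)) :
    ∫ z in (2 * c - b)..b, ‖oddReflect c f z‖ ^ 2 = 2 * ∫ z in c..b, ‖f z‖ ^ 2 := by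
  simp only [norm_oddReflect]
  exact integral_evenReflect (f := fun z ↦ ‖f z‖ ^ 2) hcb (hf.norm.pow 2)

end Reflection

theorem stmt_1 (z₁ z₂ : ℝ) (hz : z₁ < z₂) (ψ ψ' : ℝ → ℂ)
    (hderiv : ∀ z ∈ Set.Icc z₁ z₂, HasDerivAt ψ (ψ' z) z)
    (hcont : ContinuousOn ψ' (Set.Icc z₁ z₂))
    (h1 : ψ z₁ = 0) (h2 : ψ z₂ = 0) :
    ∫ z in z₁..z₂, ‖ψ z‖ ^ 2 ≤
      ((z₂ - z₁) ^ 2 / π ^ 2) * ∫ z in z₁..z₂, ‖ψ' z‖ ^ 2 := by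
  have hlt : 2 * z₁ - z₂ < z₂ := by linarith
  have hF : ∀ z ∈ Icc (2 * z₁ - z₂) z₂, HasDerivAt (oddReflect z₁ ψ) (evenReflect z₁ ψ' z) z :=
    fun z hz ↦ hasDerivAt_oddReflect (hderiv _ (add_abs_sub_mem_Icc hz)) h1
  have hFends : oddReflect z₁ ψ (2 * z₁ - z₂) = oddReflect z₁ ψ z₂ := by
    rw [oddReflect_of_le h1 hz.le, oddReflect, if_pos (by linarith), sub_sub_cancel, h2, neg_zero]
  have hFmean : ∫ z in (2 * z₁ - z₂)..z₂, oddReflect z₁ ψ z = 0 :=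
    integral_oddReflect hz.le <| (HasDerivAt.continuousOn hF).intervalIntegrable_of_Icc hlt.le
  have key := integral_norm_sq_le_of_integral_eq_zero hlt hF
    (continuousOn_evenReflect hcont).memLp_two_restrict_Ioc hFends hFmean
  have hG : ∫ z in (2 * z₁ - z₂)..z₂, ‖evenReflect z₁ ψ' z‖ ^ 2 = 2 * ∫ z in z₁..z₂, ‖ψ' z‖ ^ 2 :=
    integral_evenReflect (f := fun z ↦ ‖ψ' z‖ ^ 2) hz.le (hcont.norm.pow 2)
  have hconst : ((z₂ - (2 * z₁ - z₂)) / (2 * π)) ^ 2 = (z₂ - z₁) ^ 2 / π ^ 2 := by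
    field_simp
    ring
  rw [integral_norm_sq_oddReflect hz.le (HasDerivAt.continuousOn hderiv), hG, hconst] at key
  linarith
end

section
/- Let f : [z₁, z₂] → ℂ be C¹ with f′′ integrable and f(z) ≠ 0 for all z, let A : [z₁, z₂] → ℂ be continuous, and let w : [z₁, z₂] → ℂ be a C² solution of w′′ + A·w = 0 with w(z₁) = 0 = w(z₂). Set F = w/f. Then ∫_{z₁}^{z₂} f² |F′|² dz = ∫_{z₁}^{z₂} (f f′′ + A f²) |F|² dz. -/
/-! With `F = w / f`, the flux `f² F' = w' f - w f'` (a Wronskian) has derivative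
`w'' f - w f'' = -(A f + f'') w = -(f f'' + A f²) F`, using `w'' = -A w` and `w = f F`.
Integrating `(f² F') · conj F'` by parts against `conj F`, whose boundary values vanish because
`w` does, gives the identity. -/

open intervalIntegral ComplexConjugate MeasureTheory Set
open scoped Interval

theorem intervalIntegral.integral_mul_deriv_eq_neg_of_eq_zero {A : Type*} [NormedRing A]
    [NormedAlgebra ℝ A] [CompleteSpace A] {a b : ℝ} {u u' v v' : ℝ → A}
    (hu : ∀ x ∈ [[a, b]], HasDerivAt u (u' x) x) (hv : ∀ x ∈ [[a, b]], HasDerivAt v (v' x) x)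
    (hu' : IntervalIntegrable u' volume a b) (hv' : IntervalIntegrable v' volume a b)
    (hva : v a = 0) (hvb : v b = 0) :
    ∫ x in a..b, u x * v' x = -∫ x in a..b, u' x * v x := by
  simpa [hva, hvb] using integral_mul_deriv_eq_deriv_mul hu hv hu' hv'

theorem HasDerivAt.wronskian {𝕜 𝔸 : Type*} [NontriviallyNormedField 𝕜] [NormedCommRing 𝔸]
    [NormedAlgebra 𝕜 𝔸] {f f' w w' : 𝕜 → 𝔸} {f'' w'' : 𝔸} {x : 𝕜}
    (hf : HasDerivAt f (f' x) x) (hf' : HasDerivAt f' f'' x)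
    (hw : HasDerivAt w (w' x) x) (hw' : HasDerivAt w' w'' x) :
    HasDerivAt (fun t => w' t * f t - w t * f' t) (w'' * f x - w x * f'') x := by
  refine ((hw'.fun_mul hf).fun_sub (hw.fun_mul hf')).congr_deriv ?_
  ring

theorem integral_sq_mul_norm_sq_deriv_div_eq {a b : ℝ} {f f' f'' w w' w'' : ℝ → ℂ}
    (hf : ∀ z ∈ [[a, b]], HasDerivAt f (f' z) z) (hf' : ∀ z ∈ [[a, b]], HasDerivAt f' (f'' z) z)
    (hf'' : IntervalIntegrable f'' volume a b) (hfne : ∀ z ∈ [[a, b]], f z ≠ 0)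
    (hw : ∀ z ∈ [[a, b]], HasDerivAt w (w' z) z) (hw' : ∀ z ∈ [[a, b]], HasDerivAt w' (w'' z) z)
    (hw'' : IntervalIntegrable w'' volume a b) (hwa : w a = 0) (hwb : w b = 0) :
    ∫ z in a..b, f z ^ 2 * (‖deriv (fun t => w t / f t) z‖ : ℂ) ^ 2 =
      -∫ z in a..b, (w'' z * f z - w z * f'' z) * conj (w z / f z) := by
  have hfc := HasDerivAt.continuousOn hf
  set F' : ℝ → ℂ := fun z => (w' z * f z - w z * f' z) / f z ^ 2
  have hF : ∀ z ∈ [[a, b]], HasDerivAt (fun t => w t / f t) (F' z) z :=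
    fun z hz => (hw z hz).div (hf z hz) (hfne z hz)
  have hF'c : ContinuousOn F' [[a, b]] :=
    (((HasDerivAt.continuousOn hw').mul hfc).sub
      ((HasDerivAt.continuousOn hw).mul (HasDerivAt.continuousOn hf'))).div (hfc.pow 2)
      fun z hz => pow_ne_zero 2 (hfne z hz)
  have hflux_int : IntervalIntegrable (fun z => w'' z * f z - w z * f'' z) volume a b :=
    (hw''.mul_continuousOn hfc).sub (hf''.continuousOn_mul (HasDerivAt.continuousOn hw))
  rw [← integral_mul_deriv_eq_neg_of_eq_zero (v := fun t => conj (w t / f t))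
    (fun z hz => (hf z hz).wronskian (hf' z hz) (hw z hz) (hw' z hz))
    (fun z hz => (hF z hz).star) hflux_int
    (Complex.continuous_conj.comp_continuousOn hF'c).intervalIntegrable
    (by simp [hwa]) (by simp [hwb])]
  refine integral_congr fun z hz => ?_
  have hfz := hfne z hz
  simp only [(hF z hz).deriv, ← Complex.mul_conj', F', Complex.star_def]
  field_simp

theorem stmt_5_general (z₁ z₂ : ℝ) (hz : z₁ < z₂) (f f' f'' w w' w'' A : ℝ → ℂ)
    (hf : ∀ z ∈ Set.Icc z₁ z₂, HasDerivAt f (f' z) z)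
    (hf' : ∀ z ∈ Set.Icc z₁ z₂, HasDerivAt f' (f'' z) z)
    (hf''int : IntervalIntegrable f'' MeasureTheory.volume z₁ z₂)
    (hfne : ∀ z ∈ Set.Icc z₁ z₂, f z ≠ 0)
    (hw : ∀ z ∈ Set.Icc z₁ z₂, HasDerivAt w (w' z) z)
    (hw' : ∀ z ∈ Set.Icc z₁ z₂, HasDerivAt w' (w'' z) z)
    (hw''cont : ContinuousOn w'' (Set.Icc z₁ z₂))
    (heq : ∀ z ∈ Set.Icc z₁ z₂, w'' z + A z * w z = 0)
    (hbc1 : w z₁ = 0) (hbc2 : w z₂ = 0) :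
    (∫ z in z₁..z₂, f z ^ 2 * ((‖deriv (fun t => w t / f t) z‖ : ℂ)) ^ 2) =
      ∫ z in z₁..z₂, (f z * f'' z + A z * f z ^ 2) * ((‖w z / f z‖ : ℂ)) ^ 2 := by
  have hw''int := hw''cont.intervalIntegrable_of_Icc (μ := volume) hz.le
  rw [← uIcc_of_le hz.le] at hf hf' hfne hw hw' heq
  rw [integral_sq_mul_norm_sq_deriv_div_eq hf hf' hf''int hfne hw hw' hw''int hbc1 hbc2,
    ← intervalIntegral.integral_neg]
  refine integral_congr fun z hz => ?_
  have hfz := hfne z hz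
  have hw''z : w'' z = -(A z * w z) := eq_neg_of_add_eq_zero_left (heq z hz)
  simp only [hw''z, ← Complex.mul_conj', map_div₀]
  field_simp
  ring

theorem stmt_5 (z₁ z₂ : ℝ) (hz : z₁ < z₂) (f f' f'' w w' w'' A : ℝ → ℂ)
    (hf : ∀ z ∈ Set.Icc z₁ z₂, HasDerivAt f (f' z) z)
    (hf' : ∀ z ∈ Set.Icc z₁ z₂, HasDerivAt f' (f'' z) z)
    (hf''int : IntervalIntegrable f'' MeasureTheory.volume z₁ z₂)
    (hfne : ∀ z ∈ Set.Icc z₁ z₂, f z ≠ 0)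
    (hA : ContinuousOn A (Set.Icc z₁ z₂))
    (hw : ∀ z ∈ Set.Icc z₁ z₂, HasDerivAt w (w' z) z)
    (hw' : ∀ z ∈ Set.Icc z₁ z₂, HasDerivAt w' (w'' z) z)
    (hw''cont : ContinuousOn w'' (Set.Icc z₁ z₂))
    (heq : ∀ z ∈ Set.Icc z₁ z₂, w'' z + A z * w z = 0)
    (hbc1 : w z₁ = 0) (hbc2 : w z₂ = 0) :
    (∫ z in z₁..z₂, f z ^ 2 * ((‖deriv (fun t => w t / f t) z‖ : ℂ)) ^ 2) =
      ∫ z in z₁..z₂, (f z * f'' z + A z * f z ^ 2) * ((‖w z / f z‖ : ℂ)) ^ 2 :=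
  stmt_5_general z₁ z₂ hz f f' f'' w w' w'' A hf hf' hf''int hfne hw hw' hw''cont heq hbc1 hbc2
end

section
/- Under the hypotheses of the previous identity, if additionally Im(f²(z)) < 0 for every z ∈ [z₁, z₂] and w is not identically zero, then Im(f(z)f′′(z) + A(z)f²(z)) < 0 for some z ∈ (z₁, z₂). -/
/-!
With `F = w / f` and the Wronskian `D = w' f - w f'` (so that `F' = D / f²`), the equation
`w'' = -A w` gives
`(Im (D · conj F))' = -|F|² Im (f f'' + A f²) + |F'|² Im (f²)`.
The left side integrates to zero because `w`, hence `F`, vanishes at both endpoints. The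
second term is `≤ 0` everywhere and `< 0` wherever `F' ≠ 0`, which happens somewhere since
`F` vanishes at `z₁` but not identically. So the first term must be positive somewhere in
the open interval, i.e. `Im (f f'' + A f²) < 0` there.
-/

open MeasureTheory Set Complex ComplexConjugate

theorem exists_pos_of_hasDerivAt_add_of_nonpos {a b : ℝ} (hab : a < b) {φ g h : ℝ → ℝ}
    (hφ : ∀ x ∈ Icc a b, HasDerivAt φ (g x + h x) x) (hφab : φ a = φ b)
    (hg : IntervalIntegrable g volume a b) (hh : ContinuousOn h (Icc a b))
    (hh_nonpos : ∀ x ∈ Icc a b, h x ≤ 0) (hh_neg : ∃ c ∈ Icc a b, h c < 0) :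
    ∃ x ∈ Ioo a b, 0 < g x := by
  by_contra! hg_nonpos
  have huIcc : uIcc a b = Icc a b := uIcc_of_le hab.le
  have hh_int : IntervalIntegrable h volume a b := hh.intervalIntegrable_of_Icc hab.le
  have hsum : ∫ x in a..b, (g x + h x) = 0 := by
    rw [intervalIntegral.integral_eq_sub_of_hasDerivAt (fun x hx => hφ x (huIcc ▸ hx))
      (hg.add hh_int), hφab, sub_self]
  have hg_int_nonpos : ∫ x in a..b, g x ≤ 0 := by
    have hae : ∀ᵐ x ∂volume.restrict (Icc a b), 0 ≤ -g x := by
      rw [← Measure.restrict_congr_set Ioo_ae_eq_Icc]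
      filter_upwards [ae_restrict_mem measurableSet_Ioo] with x hx
      exact neg_nonneg.2 (hg_nonpos x hx)
    simpa [intervalIntegral.integral_neg] using
      intervalIntegral.integral_nonneg_of_ae_restrict hab.le hae
  have hh_int_neg : ∫ x in a..b, h x < 0 := by
    have := intervalIntegral.integral_pos hab hh.neg (fun x hx => neg_nonneg.2
      (hh_nonpos x (Ioc_subset_Icc_self hx))) (by simpa using hh_neg)
    simpa [intervalIntegral.integral_neg] using this
  rw [intervalIntegral.integral_add hg hh_int] at hsum
  linarith

theorem exists_deriv_ne_zero_of_ne_zero {E : Type*} [NormedAddCommGroup E] [NormedSpace ℝ E]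
    {a b : ℝ} {F F' : ℝ → E} (hF : ∀ x ∈ Icc a b, HasDerivAt F (F' x) x) (ha : F a = 0)
    (hne : ∃ x ∈ Icc a b, F x ≠ 0) : ∃ x ∈ Icc a b, F' x ≠ 0 := by
  by_contra! hF'
  obtain ⟨x, hx, hFx⟩ := hne
  refine hFx ?_
  rw [constant_of_has_deriv_right_zero (fun y hy => (hF y hy).continuousAt.continuousWithinAt)
    (fun y hy => hF' y (Ico_subset_Icc_self hy) ▸
      (hF y (Ico_subset_Icc_self hy)).hasDerivWithinAt) x hx, ha]

theorem wronskian_deriv_mul_conj_add_mul_conj_deriv (f f' f'' w w' a : ℂ) (hf : f ≠ 0) :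
    ((-(a * w)) * f - w * f'') * conj (w / f)
        + (w' * f - w * f') * conj ((w' * f - w * f') / f ^ 2)
      = -((normSq (w / f) : ℂ) * (f * f'' + a * f ^ 2))
        + (normSq ((w' * f - w * f') / f ^ 2) : ℂ) * f ^ 2 := by
  have hf' : conj f ≠ 0 := (map_ne_zero _).2 hf
  rw [← mul_conj, ← mul_conj]
  simp only [map_div₀, map_sub, map_mul, map_pow]
  field_simp
  ring

theorem hasDerivAt_im_wronskian_mul_conj_div {w w' w'' f f' f'' : ℝ → ℂ} {a : ℂ} {z : ℝ}
    (hw : HasDerivAt w (w' z) z) (hw' : HasDerivAt w' (w'' z) z)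
    (hf : HasDerivAt f (f' z) z) (hf' : HasDerivAt f' (f'' z) z) (hfz : f z ≠ 0)
    (heq : w'' z + a * w z = 0) :
    HasDerivAt (fun t => ((w' t * f t - w t * f' t) * conj (w t / f t)).im)
      (-(normSq (w z / f z) * (f z * f'' z + a * f z ^ 2).im)
        + normSq ((w' z * f z - w z * f' z) / f z ^ 2) * (f z ^ 2).im) z := by
  have hD : HasDerivAt (fun t => w' t * f t - w t * f' t) (w'' z * f z - w z * f'' z) z :=
    ((hw'.mul hf).sub (hw.mul hf')).congr_deriv (by ring)
  have hprod := hD.mul (hw.div hf hfz).star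
  rw [show w'' z = -(a * w z) by linear_combination heq] at hprod
  refine (imCLM.hasFDerivAt.comp_hasDerivAt z hprod).congr_deriv ?_
  rw [imCLM_apply, Pi.div_apply, star_def,
    wronskian_deriv_mul_conj_add_mul_conj_deriv _ _ _ _ _ _ hfz, add_im, neg_im, im_ofReal_mul,
    im_ofReal_mul]

theorem stmt_6_general (z₁ z₂ : ℝ) (hz : z₁ < z₂) (f f' f'' w w' w'' A : ℝ → ℂ)
    (hf : ∀ z ∈ Set.Icc z₁ z₂, HasDerivAt f (f' z) z)
    (hf' : ∀ z ∈ Set.Icc z₁ z₂, HasDerivAt f' (f'' z) z)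
    (hf''int : IntervalIntegrable f'' MeasureTheory.volume z₁ z₂)
    (hfne : ∀ z ∈ Set.Icc z₁ z₂, f z ≠ 0)
    (hA : ContinuousOn A (Set.Icc z₁ z₂))
    (hw : ∀ z ∈ Set.Icc z₁ z₂, HasDerivAt w (w' z) z)
    (hw' : ∀ z ∈ Set.Icc z₁ z₂, HasDerivAt w' (w'' z) z)
    (heq : ∀ z ∈ Set.Icc z₁ z₂, w'' z + A z * w z = 0)
    (hbc1 : w z₁ = 0) (hbc2 : w z₂ = 0)
    (hIm : ∀ z ∈ Set.Icc z₁ z₂, (f z ^ 2).im < 0)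
    (hwne : ∃ z ∈ Set.Icc z₁ z₂, w z ≠ 0) :
    ∃ z ∈ Set.Ioo z₁ z₂, (f z * f'' z + A z * f z ^ 2).im < 0 := by
  by_contra! hcon
  have hcont {g g' : ℝ → ℂ} (hg : ∀ x ∈ Icc z₁ z₂, HasDerivAt g (g' x) x) :
      ContinuousOn g (Icc z₁ z₂) := fun x hx => (hg x hx).continuousAt.continuousWithinAt
  have hfc := hcont hf
  have hF'c : ContinuousOn (fun x => (w' x * f x - w x * f' x) / f x ^ 2) (Icc z₁ z₂) :=
    (((hcont hw').mul hfc).sub ((hcont hw).mul (hcont hf'))).div (hfc.pow 2)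
      fun x hx => pow_ne_zero 2 (hfne x hx)
  have hint : IntervalIntegrable (fun x => f x * f'' x + A x * f x ^ 2) volume z₁ z₂ :=
    (hf''int.continuousOn_mul (uIcc_of_le hz.le ▸ hfc)).add
      ((hA.mul (hfc.pow 2)).intervalIntegrable_of_Icc hz.le)
  have him : IntervalIntegrable (fun x => (f x * f'' x + A x * f x ^ 2).im) volume z₁ z₂ :=
    ⟨imCLM.integrable_comp hint.1, imCLM.integrable_comp hint.2⟩
  obtain ⟨c, hc, hF'c_ne⟩ := exists_deriv_ne_zero_of_ne_zero
    (fun x hx => (hw x hx).div (hf x hx) (hfne x hx)) (by simp [hbc1])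
    (hwne.imp fun x ⟨hx, hwx⟩ => ⟨hx, div_ne_zero hwx (hfne x hx)⟩)
  obtain ⟨x, hx, hpos⟩ := exists_pos_of_hasDerivAt_add_of_nonpos hz
    (fun x hx => hasDerivAt_im_wronskian_mul_conj_div (hw x hx) (hw' x hx) (hf x hx) (hf' x hx)
      (hfne x hx) (heq x hx))
    (by simp [hbc1, hbc2])
    (him.continuousOn_mul
      (uIcc_of_le hz.le ▸ continuous_normSq.comp_continuousOn ((hcont hw).div hfc hfne))).neg
    ((continuous_normSq.comp_continuousOn hF'c).mul (continuous_im.comp_continuousOn (hfc.pow 2)))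
    (fun x hx => mul_nonpos_of_nonneg_of_nonpos (normSq_nonneg _) (hIm x hx).le)
    ⟨c, hc, mul_neg_of_pos_of_neg (normSq_pos.2 hF'c_ne) (hIm c hc)⟩
  linarith [mul_nonneg (normSq_nonneg (w x / f x)) (hcon x hx)]

theorem stmt_6 (z₁ z₂ : ℝ) (hz : z₁ < z₂) (f f' f'' w w' w'' A : ℝ → ℂ)
    (hf : ∀ z ∈ Set.Icc z₁ z₂, HasDerivAt f (f' z) z)
    (hf' : ∀ z ∈ Set.Icc z₁ z₂, HasDerivAt f' (f'' z) z)
    (hf''int : IntervalIntegrable f'' MeasureTheory.volume z₁ z₂)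
    (hfne : ∀ z ∈ Set.Icc z₁ z₂, f z ≠ 0)
    (hA : ContinuousOn A (Set.Icc z₁ z₂))
    (hw : ∀ z ∈ Set.Icc z₁ z₂, HasDerivAt w (w' z) z)
    (hw' : ∀ z ∈ Set.Icc z₁ z₂, HasDerivAt w' (w'' z) z)
    (hw''cont : ContinuousOn w'' (Set.Icc z₁ z₂))
    (heq : ∀ z ∈ Set.Icc z₁ z₂, w'' z + A z * w z = 0)
    (hbc1 : w z₁ = 0) (hbc2 : w z₂ = 0)
    (hIm : ∀ z ∈ Set.Icc z₁ z₂, (f z ^ 2).im < 0)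
    (hwne : ∃ z ∈ Set.Icc z₁ z₂, w z ≠ 0) :
    ∃ z ∈ Set.Ioo z₁ z₂, (f z * f'' z + A z * f z ^ 2).im < 0 :=
  stmt_6_general z₁ z₂ hz f f' f'' w w' w'' A hf hf' hf''int hfne hA hw hw' heq hbc1 hbc2 hIm hwne
end

section
/- Let θ, φ be real numbers with −π < θ < 0, −π < φ < 0, and θ(z₀) = φ(z₀) at some base point, and suppose |φ − φ₀| ≤ |θ − θ₀| with φ between θ₀ and θ (where θ₀ = φ₀). If both θ and φ lie in (−π, −π/2] or both lie in [−π/2, 0), and sin x = |sin θ|, sin y = |sin φ| with 0 ≤ x ≤ y ≤ π/2, then sin(y − x) = |sin(φ − θ)| and 2·|sin θ|·|sin(φ − θ)| ≤ |sin φ|. -/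
open Real

lemma key_ineq (a b : ℝ) (ha : 0 ≤ a) (hab : a ≤ b) (hb : b ≤ π / 2) :
    2 * Real.sin a * Real.sin (b - a) ≤ Real.sin b := by
  have h1 : Real.cos (b - 2*a) - Real.cos b = 2 * Real.sin a * Real.sin (b - a) := by
    rw [Real.cos_sub_cos]
    have e1 : (b - 2*a + b) / 2 = b - a := by ring
    have e2 : (b - 2*a - b) / 2 = -a := by ring
    rw [e1, e2, Real.sin_neg]; ring
  have h2 : Real.cos (b - 2*a) ≤ 1 := Real.cos_le_one _
  have hb0 : 0 ≤ b := le_trans ha hab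
  have hs : 0 ≤ Real.sin b := Real.sin_nonneg_of_nonneg_of_le_pi hb0
    (le_trans hb (by linarith [Real.pi_pos]))
  have hc : 0 ≤ Real.cos b := Real.cos_nonneg_of_mem_Icc ⟨by linarith [Real.pi_pos], hb⟩
  have hsq := Real.sin_sq_add_cos_sq b
  nlinarith [Real.sin_le_one b, Real.cos_le_one b]

theorem stmt_10 (θ φ x y : ℝ)
    (hrange : ((-π < θ ∧ θ ≤ -(π/2)) ∧ (-π < φ ∧ φ ≤ -(π/2))) ∨
              ((-(π/2) ≤ θ ∧ θ < 0) ∧ (-(π/2) ≤ φ ∧ φ < 0)))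
    (hx : Real.sin x = |Real.sin θ|) (hy : Real.sin y = |Real.sin φ|)
    (hx0 : 0 ≤ x) (hxy : x ≤ y) (hy2 : y ≤ π / 2) :
    Real.sin (y - x) = |Real.sin (φ - θ)| ∧
    2 * |Real.sin θ| * |Real.sin (φ - θ)| ≤ |Real.sin φ| := by
  have hπ := Real.pi_pos
  have hinj := Real.injOn_sin
  have hx2 : x ≤ π / 2 := le_trans hxy hy2
  have hy0 : 0 ≤ y := le_trans hx0 hxy
  have hxmem : x ∈ Set.Icc (-(π/2)) (π/2) := ⟨by linarith, hx2⟩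
  have hymem : y ∈ Set.Icc (-(π/2)) (π/2) := ⟨by linarith, hy2⟩
  have hsyx : 0 ≤ Real.sin (y - x) :=
    Real.sin_nonneg_of_nonneg_of_le_pi (by linarith) (by linarith)
  have first : Real.sin (y - x) = |Real.sin (φ - θ)| := by
    rcases hrange with ⟨⟨ht1, ht2⟩, ⟨hp1, hp2⟩⟩ | ⟨⟨ht1, ht2⟩, ⟨hp1, hp2⟩⟩
    · -- θ, φ ∈ (-π, -π/2]
      have hsθ : Real.sin θ ≤ 0 := Real.sin_nonpos_of_nonpos_of_neg_pi_le (by linarith) (by linarith)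
      have hsφ : Real.sin φ ≤ 0 := Real.sin_nonpos_of_nonpos_of_neg_pi_le (by linarith) (by linarith)
      have hxθ : x = π + θ := by
        apply hinj hxmem ⟨by linarith, by linarith⟩
        rw [hx, abs_of_nonpos hsθ, show π + θ = θ + π by ring, Real.sin_add_pi]
      have hyφ : y = π + φ := by
        apply hinj hymem ⟨by linarith, by linarith⟩
        rw [hy, abs_of_nonpos hsφ, show π + φ = φ + π by ring, Real.sin_add_pi]
      have : y - x = φ - θ := by rw [hxθ, hyφ]; ring
      rw [this] at hsyx ⊢
      rw [abs_of_nonneg hsyx]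
    · -- θ, φ ∈ [-π/2, 0)
      have hsθ : Real.sin θ ≤ 0 := Real.sin_nonpos_of_nonpos_of_neg_pi_le (by linarith) (by linarith)
      have hsφ : Real.sin φ ≤ 0 := Real.sin_nonpos_of_nonpos_of_neg_pi_le (by linarith) (by linarith)
      have hxθ : x = -θ := by
        apply hinj hxmem ⟨by linarith, by linarith⟩
        rw [hx, abs_of_nonpos hsθ, Real.sin_neg]
      have hyφ : y = -φ := by
        apply hinj hymem ⟨by linarith, by linarith⟩
        rw [hy, abs_of_nonpos hsφ, Real.sin_neg]
      have : y - x = θ - φ := by rw [hxθ, hyφ]; ring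
      rw [this] at hsyx ⊢
      rw [show φ - θ = -(θ - φ) by ring, Real.sin_neg, abs_neg, abs_of_nonneg hsyx]
  refine ⟨first, ?_⟩
  rw [← hx, ← hy, ← first]
  exact key_ineq x y hx0 hxy hy2
end

section
/- Let Λ ≥ 1 and let (a_n) be a sequence in a normed ring with ‖a₀‖ ≤ Λ, ‖a₁‖ ≤ 3Λ², and for n ≥ 1, ‖a_{n+1}‖ ≤ (1/(n+1))·(Λ·(n+1)·‖a_n‖) + Λ·‖a_n‖ + (1/(n+1))·Σ_{j=0}^{n} ‖a_j‖·‖a_{n−j}‖. Then ‖a_n‖ ≤ 3ⁿ·Λ^{n+1} for all n ≥ 0, so limsup_n ‖a_n‖^{1/n} ≤ 3Λ. -/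
/-!
Writing the claimed bound as `‖a n‖ ≤ Λ (3Λ)ⁿ`, strong induction closes: each of the first two
terms of the recursion contributes `Λ² (3Λ)ⁿ`, and each of the `n + 1` products in the convolution
is at most `Λ² (3Λ)ⁿ`, so the averaged sum contributes another `Λ² (3Λ)ⁿ`. A geometric bound
`C rⁿ` gives `‖a n‖^{1/n} ≤ C^{1/n} r → r`.
-/

open Finset Filter Topology

theorem sum_range_mul_sub_le {u : ℕ → ℝ} {C r : ℝ} {n : ℕ} (hu0 : ∀ j, 0 ≤ u j)
    (hu : ∀ j ≤ n, u j ≤ C * r ^ j) :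
    ∑ j ∈ range (n + 1), u j * u (n - j) ≤ (n + 1) * (C ^ 2 * r ^ n) := by
  have hterm : ∀ j ∈ range (n + 1), u j * u (n - j) ≤ C ^ 2 * r ^ n := fun j hj => by
    have hjn : j ≤ n := Nat.lt_succ_iff.mp (mem_range.mp hj)
    calc u j * u (n - j) ≤ (C * r ^ j) * (C * r ^ (n - j)) :=
          mul_le_mul (hu j hjn) (hu _ (Nat.sub_le n j)) (hu0 _) ((hu0 j).trans (hu j hjn))
      _ = C ^ 2 * r ^ n := by rw [← pow_mul_pow_sub r hjn]; ring
  simpa using sum_le_card_nsmul _ _ _ hterm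

theorem le_mul_three_mul_pow_of_recursion {u : ℕ → ℝ} {Λ : ℝ} (hu0 : ∀ n, 0 ≤ u n)
    (h0 : u 0 ≤ Λ) (h1 : u 1 ≤ 3 * Λ ^ 2)
    (hrec : ∀ n : ℕ, 1 ≤ n →
      u (n + 1) ≤ (1 / (n + 1 : ℝ)) * (Λ * (n + 1) * u n) + Λ * u n +
        (1 / (n + 1 : ℝ)) * ∑ j ∈ range (n + 1), u j * u (n - j)) (n : ℕ) :
    u n ≤ Λ * (3 * Λ) ^ n := by
  have hΛ : 0 ≤ Λ := (hu0 0).trans h0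
  induction n using Nat.strong_induction_on with
  | _ n ih =>
    match n with
    | 0 => simpa using h0
    | 1 => linarith
    | n + 2 =>
      have hsum := sum_range_mul_sub_le (n := n + 1) hu0 fun j hj => ih j (by omega)
      calc u (n + 1 + 1)
          ≤ (1 / (↑(n + 1) + 1 : ℝ)) * (Λ * (↑(n + 1) + 1) * u (n + 1)) + Λ * u (n + 1) +
            (1 / (↑(n + 1) + 1 : ℝ)) * ∑ j ∈ range (n + 1 + 1), u j * u (n + 1 - j) :=
            hrec (n + 1) (by omega)
        _ = 2 * Λ * u (n + 1) +
            (1 / (↑(n + 1) + 1 : ℝ)) * ∑ j ∈ range (n + 1 + 1), u j * u (n + 1 - j) := by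
            push_cast; field_simp; ring
        _ ≤ 2 * Λ * (Λ * (3 * Λ) ^ (n + 1)) +
            (1 / (↑(n + 1) + 1 : ℝ)) * ((↑(n + 1) + 1) * (Λ ^ 2 * (3 * Λ) ^ (n + 1))) := by
            gcongr
            exact ih _ (by omega)
        _ = Λ * (3 * Λ) ^ (n + 2) := by push_cast; field_simp; ring

theorem limsup_rpow_one_div_le_of_le_mul_pow {u : ℕ → ℝ} {C r : ℝ} (hu0 : ∀ n, 0 ≤ u n)
    (hr : 0 ≤ r) (hu : ∀ n, u n ≤ C * r ^ n) :
    limsup (fun n : ℕ => u n ^ ((1 : ℝ) / n)) atTop ≤ r := by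
  have hC : 0 ≤ C := by simpa using (hu0 0).trans (hu 0)
  -- Pass to `C + 1`: the limit `c ^ (1 / n) → 1` needs `c ≠ 0`, and `C` may vanish.
  have hroot : Tendsto (fun n : ℕ => (C + 1) ^ ((1 : ℝ) / n) * r) atTop (𝓝 r) := by
    have h := ((Real.continuousAt_const_rpow (by positivity : C + 1 ≠ 0)).tendsto.comp
      tendsto_one_div_atTop_nhds_zero_nat).mul_const r
    simpa using h
  have hle : ∀ᶠ n : ℕ in atTop, u n ^ ((1 : ℝ) / n) ≤ (C + 1) ^ ((1 : ℝ) / n) * r := by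
    filter_upwards [eventually_ne_atTop 0] with n hn
    calc u n ^ ((1 : ℝ) / n) ≤ ((C + 1) * r ^ n) ^ ((1 : ℝ) / n) := by
          gcongr
          · exact hu0 n
          · exact (hu n).trans (by gcongr; linarith)
      _ = (C + 1) ^ ((1 : ℝ) / n) * r := by
          rw [Real.mul_rpow (by positivity) (by positivity), one_div,
            Real.pow_rpow_inv_natCast hr hn]
  calc limsup (fun n : ℕ => u n ^ ((1 : ℝ) / n)) atTop
      ≤ limsup (fun n : ℕ => (C + 1) ^ ((1 : ℝ) / n) * r) atTop :=
        limsup_le_limsup hle (isCoboundedUnder_le_of_le atTop fun n => Real.rpow_nonneg (hu0 n) _)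
          hroot.isBoundedUnder_le
    _ = r := hroot.limsup_eq

theorem stmt_13_general {A : Type*} [NormedRing A] (Λ : ℝ) (a : ℕ → A)
    (h0 : ‖a 0‖ ≤ Λ) (h1 : ‖a 1‖ ≤ 3 * Λ ^ 2)
    (hrec : ∀ n : ℕ, 1 ≤ n →
      ‖a (n + 1)‖ ≤ (1 / (n + 1 : ℝ)) * (Λ * (n + 1) * ‖a n‖) + Λ * ‖a n‖ +
        (1 / (n + 1 : ℝ)) * ∑ j ∈ Finset.range (n + 1), ‖a j‖ * ‖a (n - j)‖) :
    (∀ n : ℕ, ‖a n‖ ≤ 3 ^ n * Λ ^ (n + 1)) ∧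
    Filter.limsup (fun n : ℕ => ‖a n‖ ^ ((1 : ℝ) / n)) Filter.atTop ≤ 3 * Λ := by
  have hbound := le_mul_three_mul_pow_of_recursion (fun n => norm_nonneg (a n)) h0 h1 hrec
  refine ⟨fun n => (hbound n).trans_eq (by ring), ?_⟩
  exact limsup_rpow_one_div_le_of_le_mul_pow (fun n => norm_nonneg (a n))
    (mul_nonneg zero_le_three ((norm_nonneg _).trans h0)) hbound

theorem stmt_13 {A : Type*} [NormedRing A] (Λ : ℝ) (hΛ : 1 ≤ Λ) (a : ℕ → A)
    (h0 : ‖a 0‖ ≤ Λ) (h1 : ‖a 1‖ ≤ 3 * Λ ^ 2)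
    (hrec : ∀ n : ℕ, 1 ≤ n →
      ‖a (n + 1)‖ ≤ (1 / (n + 1 : ℝ)) * (Λ * (n + 1) * ‖a n‖) + Λ * ‖a n‖ +
        (1 / (n + 1 : ℝ)) * ∑ j ∈ Finset.range (n + 1), ‖a j‖ * ‖a (n - j)‖) :
    (∀ n : ℕ, ‖a n‖ ≤ 3 ^ n * Λ ^ (n + 1)) ∧
    Filter.limsup (fun n : ℕ => ‖a n‖ ^ ((1 : ℝ) / n)) Filter.atTop ≤ 3 * Λ :=
  stmt_13_general Λ a h0 h1 hrec
end

section
/- Let u, β : [z₁, z₂] → ℝ with β ≥ 0 somewhere, and let (k, c) with k > 0, c ∈ ℝ be a neutral mode: there exists a nontrivial C² solution w of w′′ + (−k² − u″/(u−c) + gβ/(u−c)²)·w = 0 with w(z₁)=0=w(z₂), where u(z) ≠ c on [z₁,z₂]. Then |u(z) − c|²_min < g·β_max·(z₂ − z₁)²/π², hence u_min − α < c < u_max + α where α = √(g·β_max)·(z₂ − z₁)/π. -/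
/-!
Writing `w = (u - c) h`, the Taylor–Goldstein equation becomes the self-adjoint equation
`((u - c)² h')' = (k² (u - c)² - g β) h`, and multiplying by `h̄` and integrating by parts
gives `∫ (u - c)² |h'|² + k² ∫ (u - c)² |h|² = g ∫ β |h|²`. Bounding `(u - c)²` below by
its minimum `m`, `β` above by `β_max`, and `∫ |h'|²` below by `(π / (z₂ - z₁))² ∫ |h|²`
(Wirtinger's inequality) yields `m ((π / (z₂ - z₁))² + k²) ≤ g β_max`, which is strict
because `k > 0`.

Wirtinger's inequality comes from Picone's identity applied with the positive solutions
`sin (ν (z - a) + δ)` of `s'' = -ν² s` on `[a, b]`, for every `ν < π / (b - a)`.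
-/

open Real Set Topology intervalIntegral

theorem integral_mul_sq_le_integral_deriv_sq_of_pos_solution {a b : ℝ} (hab : a ≤ b)
    {φ φ' s s' q : ℝ → ℝ}
    (hφ : ∀ z ∈ Icc a b, HasDerivAt φ (φ' z) z) (hφ' : ContinuousOn φ' (Icc a b))
    (hs : ∀ z ∈ Icc a b, HasDerivAt s (s' z) z)
    (hs' : ∀ z ∈ Icc a b, HasDerivAt s' (-(q z * s z)) z)
    (hq : ContinuousOn q (Icc a b)) (hpos : ∀ z ∈ Icc a b, 0 < s z)
    (ha : φ a = 0) (hb : φ b = 0) :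
    ∫ z in a..b, q z * φ z ^ 2 ≤ ∫ z in a..b, φ' z ^ 2 := by
  have hφc : ContinuousOn φ (Icc a b) := fun z hz => (hφ z hz).continuousAt.continuousWithinAt
  have hsc : ContinuousOn s (Icc a b) := fun z hz => (hs z hz).continuousAt.continuousWithinAt
  have hs'c : ContinuousOn s' (Icc a b) :=
    fun z hz => (hs' z hz).continuousAt.continuousWithinAt
  have hrc : ContinuousOn (fun z => s' z / s z) (Icc a b) :=
    hs'c.div hsc fun z hz => (hpos z hz).ne'
  -- Picone's identity: `φ'² - q φ² - (φ' - r φ)² = (r φ²)'` with `r = s' / s`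
  have hG : ∀ z ∈ Icc a b, HasDerivAt (fun z => s' z / s z * φ z ^ 2)
      (φ' z ^ 2 - q z * φ z ^ 2 - (φ' z - s' z / s z * φ z) ^ 2) z := by
    intro z hz
    have := (hpos z hz).ne'
    refine (((hs' z hz).fun_div (hs z hz) this).fun_mul ((hφ z hz).fun_pow 2)).congr_deriv ?_
    field_simp
    ring
  have hφ'2 : IntervalIntegrable (fun z => φ' z ^ 2) MeasureTheory.volume a b :=
    ContinuousOn.intervalIntegrable_of_Icc hab (by fun_prop)
  have hqφ : IntervalIntegrable (fun z => q z * φ z ^ 2) MeasureTheory.volume a b :=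
    ContinuousOn.intervalIntegrable_of_Icc hab (by fun_prop)
  have hsq : IntervalIntegrable (fun z => (φ' z - s' z / s z * φ z) ^ 2)
      MeasureTheory.volume a b :=
    ContinuousOn.intervalIntegrable_of_Icc hab (by fun_prop)
  have hFTC := integral_eq_sub_of_hasDerivAt (fun z hz => hG z (uIcc_of_le hab ▸ hz))
    ((hφ'2.sub hqφ).sub hsq)
  rw [integral_sub (hφ'2.sub hqφ) hsq, integral_sub hφ'2 hqφ, ha, hb] at hFTC
  simp only [zero_pow two_ne_zero, mul_zero, sub_zero] at hFTC
  have hsq_nonneg : 0 ≤ ∫ z in a..b, (φ' z - s' z / s z * φ z) ^ 2 :=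
    integral_nonneg hab fun z _ => sq_nonneg _
  linarith

theorem wirtinger_inequality {a b : ℝ} (hab : a < b) {φ φ' : ℝ → ℝ}
    (hφ : ∀ z ∈ Icc a b, HasDerivAt φ (φ' z) z) (hφ' : ContinuousOn φ' (Icc a b))
    (ha : φ a = 0) (hb : φ b = 0) :
    (π / (b - a)) ^ 2 * ∫ z in a..b, φ z ^ 2 ≤ ∫ z in a..b, φ' z ^ 2 := by
  have hL : 0 < b - a := sub_pos.2 hab
  have hν : ∀ ν ∈ Ioo 0 (π / (b - a)),
      ν ^ 2 * ∫ z in a..b, φ z ^ 2 ≤ ∫ z in a..b, φ' z ^ 2 := by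
    rintro ν ⟨hν0, hνπ⟩
    -- the phase `δ` keeps `sin (ν (z - a) + δ)` positive on all of `[a, b]`
    set δ := (π - ν * (b - a)) / 2
    have hδ : 0 < δ := by
      have := (lt_div_iff₀ hL).1 hνπ
      simp only [δ]
      linarith
    rw [← integral_const_mul]
    refine integral_mul_sq_le_integral_deriv_sq_of_pos_solution hab.le hφ hφ'
      (s := fun z => sin (ν * (z - a) + δ)) (s' := fun z => ν * cos (ν * (z - a) + δ))
      (fun z _ => ?_) (fun z _ => ?_) continuousOn_const (fun z hz => ?_) ha hb
    · have := ((hasDerivAt_id z).sub_const a).const_mul ν |>.add_const δ |>.sin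
      simpa [mul_comm] using this
    · have := ((hasDerivAt_id z).sub_const a).const_mul ν |>.add_const δ |>.cos |>.const_mul ν
      exact this.congr_deriv (by simp only [id]; ring)
    · apply sin_pos_of_pos_of_lt_pi
      · nlinarith [hz.1]
      · have : ν * (z - a) ≤ ν * (b - a) := by nlinarith [hz.2]
        simp only [δ] at hδ ⊢
        linarith
  refine le_of_tendsto (f := fun ν => ν ^ 2 * ∫ z in a..b, φ z ^ 2) (x := 𝓝[<] (π / (b - a)))
    ?_ ?_
  · exact (((continuous_pow 2).mul continuous_const).tendsto _).mono_left nhdsWithin_le_nhds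
  · filter_upwards [Ioo_mem_nhdsLT (div_pos pi_pos hL)] with ν hν' using hν ν hν'

theorem wirtinger_inequality_complex {a b : ℝ} (hab : a < b) {φ φ' : ℝ → ℂ}
    (hφ : ∀ z ∈ Icc a b, HasDerivAt φ (φ' z) z) (hφ' : ContinuousOn φ' (Icc a b))
    (ha : φ a = 0) (hb : φ b = 0) :
    (π / (b - a)) ^ 2 * ∫ z in a..b, Complex.normSq (φ z) ≤
      ∫ z in a..b, Complex.normSq (φ' z) := by
  have hφc : ContinuousOn φ (Icc a b) := fun z hz => (hφ z hz).continuousAt.continuousWithinAt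
  have hre := wirtinger_inequality hab
    (fun z hz => Complex.reCLM.hasFDerivAt.comp_hasDerivAt z (hφ z hz))
    (Complex.continuous_re.comp_continuousOn hφ') (by simp [ha]) (by simp [hb])
  have him := wirtinger_inequality hab
    (fun z hz => Complex.imCLM.hasFDerivAt.comp_hasDerivAt z (hφ z hz))
    (Complex.continuous_im.comp_continuousOn hφ') (by simp [ha]) (by simp [hb])
  have hsplit : ∀ {ψ : ℝ → ℂ}, ContinuousOn ψ (Icc a b) → ∫ z in a..b, Complex.normSq (ψ z) =
      (∫ z in a..b, (ψ z).re ^ 2) + ∫ z in a..b, (ψ z).im ^ 2 := by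
    intro ψ hψ
    simp only [Complex.normSq_apply, ← sq]
    exact integral_add (ContinuousOn.intervalIntegrable_of_Icc hab.le (by fun_prop))
      (ContinuousOn.intervalIntegrable_of_Icc hab.le (by fun_prop))
  simp only [Function.comp_def, Complex.reCLM_apply, Complex.imCLM_apply] at hre him
  rw [hsplit hφc, hsplit hφ', mul_add]
  exact add_le_add hre him

theorem integral_mul_normSq_deriv_eq_neg {a b : ℝ} (hab : a ≤ b) {p q : ℝ → ℝ}
    {h h' P : ℝ → ℂ}
    (hh : ∀ z ∈ Icc a b, HasDerivAt h (h' z) z) (hh' : ContinuousOn h' (Icc a b))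
    (hP : ∀ z ∈ Icc a b, HasDerivAt P (q z * h z) z) (hq : ContinuousOn q (Icc a b))
    (hPh' : ∀ z ∈ Icc a b, P z = p z * h' z) (ha : h a = 0) (hb : h b = 0) :
    ∫ z in a..b, p z * Complex.normSq (h' z) = -∫ z in a..b, q z * Complex.normSq (h z) := by
  have hhc : ContinuousOn h (Icc a b) := fun z hz => (hh z hz).continuousAt.continuousWithinAt
  have hibp := integral_mul_deriv_eq_deriv_mul (fun z hz => hP z (uIcc_of_le hab ▸ hz))
    (fun z hz => (hh z (uIcc_of_le hab ▸ hz)).star)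
    (ContinuousOn.intervalIntegrable_of_Icc hab (by fun_prop))
    (ContinuousOn.intervalIntegrable_of_Icc hab (by fun_prop))
  simp only [ha, hb, star_zero, mul_zero, sub_zero, zero_sub] at hibp
  have hleft : ∫ z in a..b, P z * star (h' z) =
      ∫ z in a..b, ((p z * Complex.normSq (h' z) : ℝ) : ℂ) := by
    refine integral_congr fun z hz => ?_
    rw [hPh' z (uIcc_of_le hab ▸ hz), mul_assoc, Complex.star_def, Complex.mul_conj]
    push_cast; ring
  have hright : ∫ z in a..b, q z * h z * star (h z) =
      ∫ z in a..b, ((q z * Complex.normSq (h z) : ℝ) : ℂ) := by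
    refine integral_congr fun z _ => ?_
    rw [mul_assoc, Complex.star_def, Complex.mul_conj]
    push_cast; ring
  rw [hleft, hright, integral_ofReal, integral_ofReal] at hibp
  exact_mod_cast hibp

theorem mul_sq_pi_div_lt_of_dirichlet_solution {a b g k m B : ℝ} (hab : a < b) (hg : 0 ≤ g)
    (hk : 0 < k) (hm : 0 < m) {p β : ℝ → ℝ} {h h' P : ℝ → ℂ}
    (hh : ∀ z ∈ Icc a b, HasDerivAt h (h' z) z) (hh' : ContinuousOn h' (Icc a b))
    (hP : ∀ z ∈ Icc a b, HasDerivAt P (((k ^ 2 * p z - g * β z : ℝ) : ℂ) * h z) z)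
    (hp : ContinuousOn p (Icc a b)) (hβ : ContinuousOn β (Icc a b))
    (hPh' : ∀ z ∈ Icc a b, P z = p z * h' z) (ha : h a = 0) (hb : h b = 0)
    (hne : ∃ z ∈ Icc a b, h z ≠ 0) (hmp : ∀ z ∈ Icc a b, m ≤ p z)
    (hβB : ∀ z ∈ Icc a b, β z ≤ B) :
    m * (π / (b - a)) ^ 2 < g * B := by
  have hhc : ContinuousOn h (Icc a b) := fun z hz => (hh z hz).continuousAt.continuousWithinAt
  have henergy := integral_mul_normSq_deriv_eq_neg hab.le hh hh' hP (by fun_prop) hPh' ha hb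
  have hN : 0 < ∫ z in a..b, Complex.normSq (h z) := by
    obtain ⟨z₀, hz₀, hhz₀⟩ := hne
    exact integral_pos hab (by fun_prop) (fun z _ => Complex.normSq_nonneg _)
      ⟨z₀, hz₀, Complex.normSq_pos.2 hhz₀⟩
  have hwirt := wirtinger_inequality_complex hab hh hh' ha hb
  have hmono : ∀ {F G : ℝ → ℝ}, ContinuousOn F (Icc a b) → ContinuousOn G (Icc a b) →
      (∀ z ∈ Icc a b, F z ≤ G z) → ∫ z in a..b, F z ≤ ∫ z in a..b, G z := fun hF hG hFG =>
    integral_mono_on hab.le (hF.intervalIntegrable_of_Icc hab.le)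
      (hG.intervalIntegrable_of_Icc hab.le) hFG
  have h1 : m * ∫ z in a..b, Complex.normSq (h' z) ≤
      ∫ z in a..b, p z * Complex.normSq (h' z) := by
    rw [← integral_const_mul]
    exact hmono (by fun_prop) (by fun_prop) fun z hz =>
      mul_le_mul_of_nonneg_right (hmp z hz) (Complex.normSq_nonneg _)
  have h2 : m * ∫ z in a..b, Complex.normSq (h z) ≤
      ∫ z in a..b, p z * Complex.normSq (h z) := by
    rw [← integral_const_mul]
    exact hmono (by fun_prop) (by fun_prop) fun z hz =>
      mul_le_mul_of_nonneg_right (hmp z hz) (Complex.normSq_nonneg _)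
  have h3 : ∫ z in a..b, β z * Complex.normSq (h z) ≤
      B * ∫ z in a..b, Complex.normSq (h z) := by
    rw [← integral_const_mul]
    exact hmono (by fun_prop) (by fun_prop) fun z hz =>
      mul_le_mul_of_nonneg_right (hβB z hz) (Complex.normSq_nonneg _)
  have hsplit : ∫ z in a..b, (k ^ 2 * p z - g * β z) * Complex.normSq (h z) =
      k ^ 2 * (∫ z in a..b, p z * Complex.normSq (h z)) -
        g * ∫ z in a..b, β z * Complex.normSq (h z) := by
    rw [← integral_const_mul, ← integral_const_mul,
      ← integral_sub (ContinuousOn.intervalIntegrable_of_Icc hab.le (by fun_prop))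
        (ContinuousOn.intervalIntegrable_of_Icc hab.le (by fun_prop))]
    exact integral_congr fun z _ => by ring
  rw [hsplit] at henergy
  have hkm : 0 < k ^ 2 * m := by positivity
  have hbound : (m * (π / (b - a)) ^ 2 + k ^ 2 * m) * ∫ z in a..b, Complex.normSq (h z) ≤
      g * B * ∫ z in a..b, Complex.normSq (h z) := by
    linarith [mul_le_mul_of_nonneg_left hwirt hm.le, mul_le_mul_of_nonneg_left h2 (sq_nonneg k),
      mul_le_mul_of_nonneg_left h3 hg]
  linarith [le_of_mul_le_mul_right hbound hN]

theorem hasDerivAt_flux_of_taylorGoldstein {u u' u'' β : ℝ → ℝ} {w w' w'' : ℝ → ℂ}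
    {g k c z : ℝ} (hu : HasDerivAt u (u' z) z) (hu' : HasDerivAt u' (u'' z) z)
    (hw : HasDerivAt w (w' z) z) (hw' : HasDerivAt w' (w'' z) z) (hne : u z ≠ c)
    (heq : w'' z + (-(k : ℂ) ^ 2 - (u'' z : ℂ) / ((u z : ℂ) - c)
        + (g * β z : ℂ) / ((u z : ℂ) - c) ^ 2) * w z = 0) :
    HasDerivAt (fun z => w' z * ((u z : ℂ) - c) - w z * u' z)
      (((k ^ 2 * (u z - c) ^ 2 - g * β z : ℝ) : ℂ) * (w z / ((u z : ℂ) - c))) z := by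
  have hF : (u z : ℂ) - c ≠ 0 := sub_ne_zero.2 (mod_cast hne)
  refine ((hw'.mul (hu.ofReal_comp.sub_const (c : ℂ))).sub
    (hw.mul hu'.ofReal_comp)).congr_deriv ?_
  rw [show w'' z = ((k : ℂ) ^ 2 + u'' z / ((u z : ℂ) - c)
      - g * β z / ((u z : ℂ) - c) ^ 2) * w z by linear_combination heq]
  push_cast
  field_simp
  ring

theorem mul_sq_pi_div_lt_of_neutral_mode {z₁ z₂ g k c m B : ℝ} (hz : z₁ < z₂) (hg : 0 ≤ g)
    (hk : 0 < k) (hm : 0 < m) {u u' u'' β : ℝ → ℝ}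
    (hu : ∀ z ∈ Icc z₁ z₂, HasDerivAt u (u' z) z)
    (hu' : ∀ z ∈ Icc z₁ z₂, HasDerivAt u' (u'' z) z)
    (hβ : ContinuousOn β (Icc z₁ z₂)) (hne : ∀ z ∈ Icc z₁ z₂, u z ≠ c)
    {w w' w'' : ℝ → ℂ} (hw : ∀ z ∈ Icc z₁ z₂, HasDerivAt w (w' z) z)
    (hw' : ∀ z ∈ Icc z₁ z₂, HasDerivAt w' (w'' z) z)
    (heq : ∀ z ∈ Icc z₁ z₂,
      w'' z + (-(k : ℂ) ^ 2 - (u'' z : ℂ) / ((u z : ℂ) - c)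
        + (g * β z : ℂ) / ((u z : ℂ) - c) ^ 2) * w z = 0)
    (hbc1 : w z₁ = 0) (hbc2 : w z₂ = 0) (hwne : ∃ z ∈ Icc z₁ z₂, w z ≠ 0)
    (hmu : ∀ z ∈ Icc z₁ z₂, m ≤ (u z - c) ^ 2) (hβB : ∀ z ∈ Icc z₁ z₂, β z ≤ B) :
    m * (π / (z₂ - z₁)) ^ 2 < g * B := by
  have hF : ∀ z ∈ Icc z₁ z₂, (u z : ℂ) - c ≠ 0 :=
    fun z hz => sub_ne_zero.2 (mod_cast hne z hz)
  have huc : ContinuousOn u (Icc z₁ z₂) := fun z hz => (hu z hz).continuousAt.continuousWithinAt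
  have hu'c : ContinuousOn u' (Icc z₁ z₂) :=
    fun z hz => (hu' z hz).continuousAt.continuousWithinAt
  have hwc : ContinuousOn w (Icc z₁ z₂) := fun z hz => (hw z hz).continuousAt.continuousWithinAt
  have hw'c : ContinuousOn w' (Icc z₁ z₂) :=
    fun z hz => (hw' z hz).continuousAt.continuousWithinAt
  refine mul_sq_pi_div_lt_of_dirichlet_solution hz hg hk hm (p := fun z => (u z - c) ^ 2)
    (h := fun z => w z / ((u z : ℂ) - c))
    (h' := fun z => (w' z * ((u z : ℂ) - c) - w z * u' z) / ((u z : ℂ) - c) ^ 2)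
    (fun z hz => (hw z hz).div ((hu z hz).ofReal_comp.sub_const (c : ℂ)) (hF z hz))
    ?_ (fun z hz => hasDerivAt_flux_of_taylorGoldstein (hu z hz) (hu' z hz) (hw z hz)
      (hw' z hz) (hne z hz) (heq z hz)) (by fun_prop) hβ (fun z hz => ?_)
    (by simp [hbc1]) (by simp [hbc2]) ?_ hmu hβB
  · exact ContinuousOn.div (by fun_prop) (by fun_prop) fun z hz => pow_ne_zero 2 (hF z hz)
  · have := hF z hz
    push_cast
    field_simp
  · obtain ⟨z₀, hz₀, hwz₀⟩ := hwne
    exact ⟨z₀, hz₀, div_ne_zero hwz₀ (hF z₀ hz₀)⟩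

theorem stmt_15_general (z₁ z₂ g k c : ℝ) (hz : z₁ < z₂) (hg : 0 < g) (hk : 0 < k)
    (u u' u'' β : ℝ → ℝ)
    (hu : ∀ z ∈ Set.Icc z₁ z₂, HasDerivAt u (u' z) z)
    (hu' : ∀ z ∈ Set.Icc z₁ z₂, HasDerivAt u' (u'' z) z)
    (hβ : ContinuousOn β (Set.Icc z₁ z₂))
    (hne : ∀ z ∈ Set.Icc z₁ z₂, u z ≠ c)
    (w w' w'' : ℝ → ℂ)
    (hw : ∀ z ∈ Set.Icc z₁ z₂, HasDerivAt w (w' z) z)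
    (hw' : ∀ z ∈ Set.Icc z₁ z₂, HasDerivAt w' (w'' z) z)
    (heq : ∀ z ∈ Set.Icc z₁ z₂,
      w'' z + (-(k : ℂ) ^ 2 - (u'' z : ℂ) / ((u z : ℂ) - c)
        + (g * β z : ℂ) / ((u z : ℂ) - c) ^ 2) * w z = 0)
    (hbc1 : w z₁ = 0) (hbc2 : w z₂ = 0)
    (hwne : ∃ z ∈ Set.Icc z₁ z₂, w z ≠ 0) :
    sInf ((fun z => (u z - c) ^ 2) '' Set.Icc z₁ z₂) <
      g * sSup (β '' Set.Icc z₁ z₂) * (z₂ - z₁) ^ 2 / π ^ 2 ∧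
    sInf (u '' Set.Icc z₁ z₂) -
        Real.sqrt (g * sSup (β '' Set.Icc z₁ z₂)) * (z₂ - z₁) / π < c ∧
    c < sSup (u '' Set.Icc z₁ z₂) +
        Real.sqrt (g * sSup (β '' Set.Icc z₁ z₂)) * (z₂ - z₁) / π := by
  have huc : ContinuousOn u (Icc z₁ z₂) :=
    fun z hzI => (hu z hzI).continuousAt.continuousWithinAt
  have hfK : IsCompact ((fun z => (u z - c) ^ 2) '' Icc z₁ z₂) :=
    isCompact_Icc.image_of_continuousOn (by fun_prop)
  have huK : IsCompact (u '' Icc z₁ z₂) := isCompact_Icc.image_of_continuousOn huc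
  have hβK : IsCompact (β '' Icc z₁ z₂) := isCompact_Icc.image_of_continuousOn hβ
  obtain ⟨z₀, hz₀, hmin : (u z₀ - c) ^ 2 = _⟩ := hfK.sInf_mem ((nonempty_Icc.2 hz.le).image _)
  set B := sSup (β '' Icc z₁ z₂)
  have hm : 0 < (u z₀ - c) ^ 2 := by
    have := sub_ne_zero.2 (hne z₀ hz₀)
    positivity
  have key := mul_sq_pi_div_lt_of_neutral_mode hz hg.le hk hm hu hu' hβ hne hw hw' heq hbc1 hbc2
    hwne (fun z hzI => hmin ▸ csInf_le hfK.bddBelow (mem_image_of_mem _ hzI))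
    (fun z hzI => le_csSup hβK.bddAbove (mem_image_of_mem β hzI))
  have hL : 0 < z₂ - z₁ := sub_pos.2 hz
  have hgB : 0 ≤ g * B := (mul_pos hm (by positivity)).le.trans key.le
  have hsq : (u z₀ - c) ^ 2 < g * B * (z₂ - z₁) ^ 2 / π ^ 2 := by
    rw [lt_div_iff₀ (by positivity)]
    calc (u z₀ - c) ^ 2 * π ^ 2 = (u z₀ - c) ^ 2 * (π / (z₂ - z₁)) ^ 2 * (z₂ - z₁) ^ 2 := by
          field_simp
      _ < g * B * (z₂ - z₁) ^ 2 := by gcongr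
  have hα : (u z₀ - c) ^ 2 < (√(g * B) * (z₂ - z₁) / π) ^ 2 := by
    rwa [div_pow, mul_pow, sq_sqrt hgB]
  obtain ⟨hlo, hhi⟩ := abs_lt_of_sq_lt_sq' hα (by positivity)
  refine ⟨hmin ▸ hsq, ?_, ?_⟩
  · linarith [csInf_le huK.bddBelow (mem_image_of_mem u hz₀)]
  · linarith [le_csSup huK.bddAbove (mem_image_of_mem u hz₀)]

theorem stmt_15 (z₁ z₂ g k c : ℝ) (hz : z₁ < z₂) (hg : 0 < g) (hk : 0 < k)
    (u u' u'' β : ℝ → ℝ)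
    (hu : ∀ z ∈ Set.Icc z₁ z₂, HasDerivAt u (u' z) z)
    (hu' : ∀ z ∈ Set.Icc z₁ z₂, HasDerivAt u' (u'' z) z)
    (hucont : ContinuousOn u'' (Set.Icc z₁ z₂))
    (hβ : ContinuousOn β (Set.Icc z₁ z₂))
    (hβpos : ∃ z ∈ Set.Icc z₁ z₂, 0 ≤ β z)
    (hne : ∀ z ∈ Set.Icc z₁ z₂, u z ≠ c)
    (w w' w'' : ℝ → ℂ)
    (hw : ∀ z ∈ Set.Icc z₁ z₂, HasDerivAt w (w' z) z)
    (hw' : ∀ z ∈ Set.Icc z₁ z₂, HasDerivAt w' (w'' z) z)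
    (hwcont : ContinuousOn w'' (Set.Icc z₁ z₂))
    (heq : ∀ z ∈ Set.Icc z₁ z₂,
      w'' z + (-(k : ℂ) ^ 2 - (u'' z : ℂ) / ((u z : ℂ) - c)
        + (g * β z : ℂ) / ((u z : ℂ) - c) ^ 2) * w z = 0)
    (hbc1 : w z₁ = 0) (hbc2 : w z₂ = 0)
    (hwne : ∃ z ∈ Set.Icc z₁ z₂, w z ≠ 0) :
    sInf ((fun z => (u z - c) ^ 2) '' Set.Icc z₁ z₂) <
      g * sSup (β '' Set.Icc z₁ z₂) * (z₂ - z₁) ^ 2 / π ^ 2 ∧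
    sInf (u '' Set.Icc z₁ z₂) -
        Real.sqrt (g * sSup (β '' Set.Icc z₁ z₂)) * (z₂ - z₁) / π < c ∧
    c < sSup (u '' Set.Icc z₁ z₂) +
        Real.sqrt (g * sSup (β '' Set.Icc z₁ z₂)) * (z₂ - z₁) / π :=
  stmt_15_general z₁ z₂ g k c hz hg hk u u' u'' β hu hu' hβ hne w w' w'' hw hw' heq hbc1 hbc2 hwne
end

section
/- Let A, B ∈ (0, π/2], r > 0 and c_i ∈ (0, r] with A, B ≥ arctan(c_i/(2r)) and A + B ≥ arctan(2c_i/r). If ν_m ≥ 0 satisfies ν_m·(π − A − B) ≥ min(A, B), then c_i ≤ ν_m·π·r / (arctan(1/2) + ν_m·arctan 2). -/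
/-! Since `arctan` is concave on `[0, ∞)` and vanishes at `0`, `arctan (t * x) ≥ t * arctan x` for
`t ∈ [0, 1]` and `x ≥ 0`. With `t = c_i / r` the hypotheses give `t * arctan (1/2) ≤ min A B` and
`t * arctan 2 ≤ A + B`, hence
`t * arctan (1/2) ≤ ν_m * (π - A - B) ≤ ν_m * π - ν_m * t * arctan 2`, which rearranges to the bound. -/

open Real Set

theorem concaveOn_arctan_Ici : ConcaveOn ℝ (Ici 0) arctan := by
  refine AntitoneOn.concaveOn_of_deriv (convex_Ici 0) continuous_arctan.continuousOn
    differentiable_arctan.differentiableOn ?_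
  rw [interior_Ici, Real.deriv_arctan]
  intro x hx y _ hxy
  have hx : 0 ≤ x := le_of_lt hx
  show 1 / (1 + y ^ 2) ≤ 1 / (1 + x ^ 2)
  gcongr

theorem mul_arctan_le_arctan_mul {t x : ℝ} (ht₀ : 0 ≤ t) (ht₁ : t ≤ 1) (hx : 0 ≤ x) :
    t * arctan x ≤ arctan (t * x) := by
  have := concaveOn_arctan_Ici.2 (mem_Ici.2 le_rfl) (mem_Ici.2 hx) (sub_nonneg.2 ht₁) ht₀
    (sub_add_cancel 1 t)
  simpa using this

theorem stmt_17_general (A B r c_i ν_m : ℝ)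
    (hr : 0 < r) (hci : c_i ∈ Set.Ioc 0 r)
    (hA' : A ≥ Real.arctan (c_i / (2 * r))) (hB' : B ≥ Real.arctan (c_i / (2 * r)))
    (hAB : A + B ≥ Real.arctan (2 * c_i / r))
    (hν : 0 ≤ ν_m) (hmain : ν_m * (π - A - B) ≥ min A B) :
    c_i ≤ ν_m * π * r / (Real.arctan (1 / 2) + ν_m * Real.arctan 2) := by
  obtain ⟨hc₀, hcr⟩ := hci
  set t := c_i / r
  have ht₀ : 0 ≤ t := div_nonneg hc₀.le hr.le
  have ht₁ : t ≤ 1 := (div_le_one hr).2 hcr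
  have hhalf : t * arctan (1 / 2) ≤ min A B := by
    have h := mul_arctan_le_arctan_mul ht₀ ht₁ (x := 1 / 2) (by norm_num)
    rw [show t * (1 / 2) = c_i / (2 * r) by ring] at h
    exact le_min (h.trans hA') (h.trans hB')
  have htwo : t * arctan 2 ≤ A + B := by
    have h := mul_arctan_le_arctan_mul ht₀ ht₁ (x := 2) (by norm_num)
    rw [show t * 2 = 2 * c_i / r by ring] at h
    exact h.trans hAB
  have hkey : t * (arctan (1 / 2) + ν_m * arctan 2) ≤ ν_m * π :=
    calc t * (arctan (1 / 2) + ν_m * arctan 2) = t * arctan (1 / 2) + ν_m * (t * arctan 2) := by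
          ring
      _ ≤ ν_m * (π - A - B) + ν_m * (A + B) :=
          add_le_add (hhalf.trans hmain) (mul_le_mul_of_nonneg_left htwo hν)
      _ = ν_m * π := by ring
  have hD : 0 < arctan (1 / 2) + ν_m * arctan 2 :=
    add_pos_of_pos_of_nonneg (arctan_pos.2 (by norm_num))
      (mul_nonneg hν (arctan_nonneg.2 (by norm_num)))
  rw [le_div_iff₀ hD]
  calc c_i * (arctan (1 / 2) + ν_m * arctan 2)
      = t * (arctan (1 / 2) + ν_m * arctan 2) * r := by
        rw [mul_right_comm, div_mul_cancel₀ c_i hr.ne']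
    _ ≤ ν_m * π * r := mul_le_mul_of_nonneg_right hkey hr.le

theorem stmt_17 (A B r c_i ν_m : ℝ)
    (hA : A ∈ Set.Ioc 0 (π / 2)) (hB : B ∈ Set.Ioc 0 (π / 2))
    (hr : 0 < r) (hci : c_i ∈ Set.Ioc 0 r)
    (hA' : A ≥ Real.arctan (c_i / (2 * r))) (hB' : B ≥ Real.arctan (c_i / (2 * r)))
    (hAB : A + B ≥ Real.arctan (2 * c_i / r))
    (hν : 0 ≤ ν_m) (hmain : ν_m * (π - A - B) ≥ min A B) :
    c_i ≤ ν_m * π * r / (Real.arctan (1 / 2) + ν_m * Real.arctan 2) :=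
  stmt_17_general A B r c_i ν_m hr hci hA' hB' hAB hν hmain
end
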